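/- Let Δ be the simplicial complex on {1,...,d+2} (d ≥ 5) with facets [d+2]∖{1,j} for 2 ≤ j ≤ d and [d+2]∖{d+1,d+2}. Then the f-vector of Δ satisfies: the number of (d-1)-faces is d, and the h-vector of Δ is (1, 2, 1, 1, ..., 1, -1), where h_i = 1 for 2 ≤ i ≤ d-1 and h_d = -1. -/

import Mathlib

/-!
Put `W = {2, …, d+2}`, `L = {1, …, d}` and `K = W ∩ L = {2, …, d}`. A face of `Δ` is a subset of
`W` missing some point of `K`, or a subset of `L`; equivalently, a subset of `W` not strictly
containing `K`, or a subset of `L`, and the two kinds now overlap exactly in the subsets of `K`.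
Inclusion–exclusion gives `f_i = C(d+1,i) + C(d,i) - C(d-1,i) - e_i`, where `e_i` counts the
`i`-subsets of `W` strictly containing `K`: `e_i = 0` for `i < d` and `e_d = 2`.

By upper negation and Chu–Vandermonde, the h-transform of the f-vector `C(n, ·)` of a simplex is
`k ↦ C(n + k - d - 1, k)` (a generalized binomial coefficient). Hence
`h_k = C(k,k) + C(k-1,k) - C(k-2,k) - e_k`, which is `1, 2, 1, …, 1, -1`.
-/

open Finset

lemma Ring.choose_natCast_self (k : ℕ) : Ring.choose (k : ℤ) k = 1 := by
  rw [Ring.choose_natCast, Nat.choose_self, Nat.cast_one]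

lemma Ring.choose_natCast_sub_eq_zero {k : ℕ} {m : ℤ} (hm : 0 < m) (hmk : m ≤ k) :
    Ring.choose ((k : ℤ) - m) k = 0 := by
  lift m to ℕ using hm.le
  rw [← Nat.cast_sub (by exact_mod_cast hmk), Ring.choose_natCast,
    Nat.choose_eq_zero_of_lt (by omega), Nat.cast_zero]

/-- `fVector Δ i` counts the faces with `i` vertices, i.e. it is the `f_{i-1}` of the usual
indexing. -/
def fVector (Δ : Finset (Finset ℕ)) (i : ℕ) : ℤ :=
  #(Δ.filter (#· = i))

def hVector (d : ℕ) (f : ℕ → ℤ) (k : ℕ) : ℤ :=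
  ∑ i ∈ range (k + 1), (-1) ^ (k - i) * ((d - i).choose (k - i) : ℤ) * f i

section hVector

variable {d k : ℕ}

lemma hVector_add (f g : ℕ → ℤ) : hVector d (f + g) k = hVector d f k + hVector d g k := by
  simp only [hVector, Pi.add_apply, mul_add, sum_add_distrib]

lemma hVector_sub (f g : ℕ → ℤ) : hVector d (f - g) k = hVector d f k - hVector d g k := by
  simp only [hVector, Pi.sub_apply, mul_sub, sum_sub_distrib]

lemma hVector_eq_of_eq_zero_of_lt {f : ℕ → ℤ} (hf : ∀ i < k, f i = 0) : hVector d f k = f k := by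
  rw [hVector, sum_range_succ, sum_eq_zero fun i hi => by rw [hf i (mem_range.1 hi), mul_zero]]
  simp

lemma hVector_choose (n : ℕ) (hk : k ≤ d) :
    hVector d (fun i => (n.choose i : ℤ)) k = Ring.choose ((n : ℤ) + k - d - 1) k := by
  rw [hVector, show (n : ℤ) + k - d - 1 = n + (k - (d + 1)) by ring,
    Ring.add_choose_eq _ (Commute.all _ _),
    Nat.sum_antidiagonal_eq_sum_range_succ (fun i j => Ring.choose (n : ℤ) i * Ring.choose _ j)]
  refine sum_congr rfl fun i hi => ?_
  have hik : i ≤ k := Nat.lt_succ_iff.1 (mem_range.1 hi)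
  have hneg : (k : ℤ) - (d + 1) = -((d + 1 - k : ℕ) : ℤ) := by
    push_cast [Nat.cast_sub (by omega : k ≤ d + 1)]
    ring
  have hup : ((d + 1 - k : ℕ) : ℤ) + ((k - i : ℕ) : ℤ) - 1 = ((d - i : ℕ) : ℤ) := by
    push_cast [Nat.cast_sub (by omega : k ≤ d + 1), Nat.cast_sub hik, Nat.cast_sub (hik.trans hk)]
    ring
  rw [Ring.choose_natCast, hneg, Ring.choose_neg, hup, Ring.choose_natCast, Units.smul_def,
    smul_eq_mul, Int.coe_negOnePow_natCast]
  ring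

end hVector

section SetFamily

variable {α : Type*} [DecidableEq α]

lemma subset_not_inter_subset_or_subset_iff {F W L : Finset α} :
    (F ⊆ W ∧ ¬W ∩ L ⊆ F) ∨ F ⊆ L ↔ (F ⊆ W ∧ ¬W ∩ L ⊂ F) ∨ F ⊆ L := by
  refine or_congr_left' fun hFL => and_congr_right fun hFW => ?_
  refine ⟨fun h hlt => h hlt.subset, fun h hsub => hFL ?_⟩
  rw [← (hsub.eq_or_ssubset.resolve_right h)]
  exact inter_subset_right

lemma card_filter_not_ssuperset_union_powersetCard (W L : Finset α) (i : ℕ) :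
    (#((W.powersetCard i).filter (¬W ∩ L ⊂ ·) ∪ L.powersetCard i) : ℤ) =
      (#W).choose i + (#L).choose i - (#(W ∩ L)).choose i -
        #((W.powersetCard i).filter (W ∩ L ⊂ ·)) := by
  have hinter : (W.powersetCard i).filter (¬W ∩ L ⊂ ·) ∩ L.powersetCard i =
      (W ∩ L).powersetCard i := by
    ext F
    simp only [mem_inter, mem_filter, mem_powersetCard, subset_inter_iff]
    exact ⟨fun ⟨⟨⟨hW, hi⟩, _⟩, hL, _⟩ => ⟨⟨hW, hL⟩, hi⟩,
      fun ⟨⟨hW, hL⟩, hi⟩ => ⟨⟨⟨hW, hi⟩, (subset_inter hW hL).not_ssubset⟩, hL, hi⟩⟩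
  have hunion := card_union_add_card_inter ((W.powersetCard i).filter (¬W ∩ L ⊂ ·))
    (L.powersetCard i)
  have hsplit := card_filter_add_card_filter_not (s := W.powersetCard i) (W ∩ L ⊂ ·)
  rw [hinter, card_powersetCard, card_powersetCard] at hunion
  rw [card_powersetCard] at hsplit
  omega

lemma filter_ssuperset_powersetCard_eq_empty {W K : Finset α} {i : ℕ} (hi : i ≤ #K) :
    (W.powersetCard i).filter (K ⊂ ·) = ∅ :=
  filter_eq_empty_iff.2 fun _ hF hKF =>
    (card_lt_card hKF).not_ge ((mem_powersetCard.1 hF).2.le.trans hi)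

lemma card_filter_ssuperset_powersetCard {W K : Finset α} {i : ℕ} (hKW : K ⊆ W) (hi : #K < i) :
    #((W.powersetCard i).filter (K ⊂ ·)) = (#W - #K).choose (i - #K) := by
  rw [← card_filter_powersetCard_subset K W i hKW hi.le]
  refine congrArg card (filter_congr fun F hF => ⟨fun hKF => hKF.subset, fun hKF => ?_⟩)
  exact hKF.ssubset_of_ne (by rintro rfl; exact hi.ne (mem_powersetCard.1 hF).2)

end SetFamily

def exampleComplex (d : ℕ) : Finset (Finset ℕ) :=
  (Icc 1 (d + 2)).powerset.filter (fun F =>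
    (∃ j ∈ Icc 2 d, F ⊆ Icc 1 (d + 2) \ {1, j}) ∨ F ⊆ Icc 1 (d + 2) \ {d + 1, d + 2})

lemma Icc_two_inter_Icc_one (d : ℕ) : Icc 2 (d + 2) ∩ Icc 1 d = Icc 2 d := by
  ext x
  simp only [mem_inter, mem_Icc]
  omega

lemma mem_exampleComplex {d : ℕ} {F : Finset ℕ} :
    F ∈ exampleComplex d ↔ (F ⊆ Icc 2 (d + 2) ∧ ¬Icc 2 d ⊂ F) ∨ F ⊆ Icc 1 d := by
  have hpair : ∀ j ∈ Icc 2 d, Icc 1 (d + 2) \ {1, j} = (Icc 2 (d + 2)).erase j := by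
    intro j hj
    ext x
    simp only [mem_Icc] at hj
    simp only [mem_sdiff, mem_Icc, mem_insert, mem_singleton, mem_erase]
    omega
  have htop : Icc 1 (d + 2) \ {d + 1, d + 2} = Icc 1 d := by
    ext x
    simp only [mem_sdiff, mem_Icc, mem_insert, mem_singleton]
    omega
  have hW : Icc 2 (d + 2) ⊆ Icc 1 (d + 2) := Icc_subset_Icc_left one_le_two
  have hL : Icc 1 d ⊆ Icc 1 (d + 2) := Icc_subset_Icc_right (Nat.le_add_right d 2)
  have hfacet : (∃ j ∈ Icc 2 d, F ⊆ Icc 1 (d + 2) \ {1, j}) ↔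
      F ⊆ Icc 2 (d + 2) ∧ ¬Icc 2 d ⊆ F := by
    rw [not_subset]
    constructor
    · rintro ⟨j, hj, hF⟩
      rw [hpair j hj, subset_erase] at hF
      exact ⟨hF.1, j, hj, hF.2⟩
    · rintro ⟨hF, j, hj, hjF⟩
      exact ⟨j, hj, by rw [hpair j hj, subset_erase]; exact ⟨hF, hjF⟩⟩
  rw [exampleComplex, mem_filter, mem_powerset, htop, hfacet, ← Icc_two_inter_Icc_one d,
    subset_not_inter_subset_or_subset_iff]
  refine and_iff_right_of_imp ?_
  rintro (hF | hF)
  exacts [hF.1.trans hW, hF.trans hL]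

lemma filter_card_exampleComplex (d i : ℕ) :
    (exampleComplex d).filter (#· = i) =
      ((Icc 2 (d + 2)).powersetCard i).filter (¬Icc 2 d ⊂ ·) ∪ (Icc 1 d).powersetCard i := by
  ext F
  simp only [mem_filter, mem_union, mem_powersetCard, mem_exampleComplex]
  tauto

def exampleComplexDefect (d i : ℕ) : ℕ :=
  #(((Icc 2 (d + 2)).powersetCard i).filter (Icc 2 d ⊂ ·))

lemma fVector_exampleComplex (d i : ℕ) :
    fVector (exampleComplex d) i =
      (d + 1).choose i + d.choose i - (d - 1).choose i - exampleComplexDefect d i := by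
  rw [fVector, filter_card_exampleComplex, ← Icc_two_inter_Icc_one,
    card_filter_not_ssuperset_union_powersetCard, Icc_two_inter_Icc_one, Nat.card_Icc,
    Nat.card_Icc, Nat.card_Icc]
  congr 4

lemma exampleComplexDefect_of_lt {d i : ℕ} (hi : i < d) : exampleComplexDefect d i = 0 := by
  rw [exampleComplexDefect, filter_ssuperset_powersetCard_eq_empty (by rw [Nat.card_Icc]; omega),
    card_empty]

lemma exampleComplexDefect_self {d : ℕ} (hd : 1 ≤ d) : exampleComplexDefect d d = 2 := by
  rw [exampleComplexDefect, card_filter_ssuperset_powersetCard (Icc_subset_Icc_right (by omega))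
    (by rw [Nat.card_Icc]; omega), Nat.card_Icc, Nat.card_Icc,
    show d + 2 + 1 - 2 - (d + 1 - 2) = 2 by omega, show d - (d + 1 - 2) = 1 by omega]
  rfl

lemma fVector_exampleComplex_self {d : ℕ} (hd : 1 ≤ d) : fVector (exampleComplex d) d = d := by
  rw [fVector_exampleComplex, Nat.choose_succ_self_right, Nat.choose_self,
    Nat.choose_eq_zero_of_lt (by omega : d - 1 < d), exampleComplexDefect_self hd]
  push_cast
  ring

lemma hVector_exampleComplex {d k : ℕ} (hd : 1 ≤ d) (hk : k ≤ d) :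
    hVector d (fVector (exampleComplex d)) k = Ring.choose (k : ℤ) k +
      Ring.choose ((k : ℤ) - 1) k - Ring.choose ((k : ℤ) - 2) k - exampleComplexDefect d k := by
  have hf : fVector (exampleComplex d) = (fun i => ((d + 1).choose i : ℤ)) +
      (fun i => (d.choose i : ℤ)) - (fun i => ((d - 1).choose i : ℤ)) -
        (fun i => (exampleComplexDefect d i : ℤ)) :=
    funext (fVector_exampleComplex d)
  rw [hf, hVector_sub, hVector_sub, hVector_add, hVector_choose _ hk, hVector_choose _ hk,
    hVector_choose _ hk, hVector_eq_of_eq_zero_of_lt fun i hi => by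
      rw [exampleComplexDefect_of_lt (by omega), Nat.cast_zero]]
  push_cast [Nat.cast_sub hd]
  ring_nf

theorem stmt_14 (d : ℕ) (hd : 5 ≤ d)
    (Δ : Finset (Finset ℕ))
    (hΔ : Δ = (Finset.Icc 1 (d + 2)).powerset.filter (fun F =>
      (∃ j ∈ Finset.Icc 2 d, F ⊆ (Finset.Icc 1 (d + 2)) \ {1, j}) ∨
        F ⊆ (Finset.Icc 1 (d + 2)) \ {d + 1, d + 2}))
    (f : ℕ → ℤ) (hf : ∀ i, f i = ((Δ.filter (fun F => F.card = i)).card : ℤ))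
    (h : ℕ → ℤ)
    (hh : ∀ k, h k = ∑ i ∈ Finset.range (k + 1),
      (-1 : ℤ) ^ (k - i) * ((d - i).choose (k - i) : ℤ) * f i) :
    f d = d ∧ h 0 = 1 ∧ h 1 = 2 ∧ (∀ k, 2 ≤ k → k ≤ d - 1 → h k = 1) ∧ h d = -1 := by
  have hfΔ : f = fVector (exampleComplex d) := funext fun i => by rw [hf, hΔ]; rfl
  have hhΔ (k : ℕ) (hk : k ≤ d) : h k = Ring.choose (k : ℤ) k +
      Ring.choose ((k : ℤ) - 1) k - Ring.choose ((k : ℤ) - 2) k - exampleComplexDefect d k := by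
    rw [hh, ← hVector, hfΔ, hVector_exampleComplex (by omega) hk]
  refine ⟨hfΔ ▸ fVector_exampleComplex_self (by omega), ?_, ?_, fun k hk2 hkd => ?_, ?_⟩
  · rw [hhΔ 0 (by omega), exampleComplexDefect_of_lt (by omega)]
    simp only [Ring.choose_zero_right]
    norm_num
  · rw [hhΔ 1 (by omega), exampleComplexDefect_of_lt (by omega)]
    simp only [Ring.choose_one_right]
    norm_num
  · rw [hhΔ k (by omega), exampleComplexDefect_of_lt (by omega), Ring.choose_natCast_self,
      Ring.choose_natCast_sub_eq_zero (by omega) (by omega),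
      Ring.choose_natCast_sub_eq_zero (by omega) (by omega)]
    norm_num
  · rw [hhΔ d le_rfl, exampleComplexDefect_self (by omega), Ring.choose_natCast_self,
      Ring.choose_natCast_sub_eq_zero (by omega) (by omega),
      Ring.choose_natCast_sub_eq_zero (by omega) (by omega)]
    norm_num
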